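/- For all integers p ≥ 0 and n ≥ 1, ∑_{j=1}^{n} (1/j) · C(j+p, p+1) = (1/(p+1)!) · ∑_{t=0}^{p} s(p+1, t+1) · S_t(n), where s is the unsigned Stirling number of the first kind and S_t(n) = ∑_{k=1}^{n} k^t. -/

import Mathlib

/-!
The rising factorial `j (j + 1) ⋯ (j + p) = (p + 1)! * C(j + p, p + 1)` expands as
`∑ₖ s(p + 1, k) jᵏ`, and `s(p + 1, 0) = 0`; so dividing by `j` leaves `∑ₜ s(p + 1, t + 1) jᵗ`,
and summing over `j` gives power sums.
-/

def stirling : ℕ → ℕ → ℕ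
  | 0, 0 => 1
  | 0, _ + 1 => 0
  | _ + 1, 0 => 0
  | n + 1, k + 1 => n * stirling n (k + 1) + stirling n k

open Finset Polynomial Nat

theorem stirling_eq_stirlingFirst : ∀ n k, stirling n k = stirlingFirst n k
  | 0, 0 | 0, _ + 1 | _ + 1, 0 => rfl
  | n + 1, k + 1 => by
    rw [stirling, stirlingFirst_succ_succ, stirling_eq_stirlingFirst n (k + 1),
      stirling_eq_stirlingFirst n k]

theorem coeff_ascPochhammer {R : Type*} [Semiring R] (m k : ℕ) :
    (ascPochhammer R m).coeff k = stirlingFirst m k := by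
  induction m generalizing k with
  | zero => cases k <;> simp [coeff_one]
  | succ m ih =>
    rw [ascPochhammer_succ_right, mul_add, coeff_add, ← C_eq_natCast, coeff_mul_C, ih]
    cases k with
    | zero => cases m <;> simp
    | succ k =>
      rw [coeff_mul_X, ih, stirlingFirst_succ_succ, Nat.cast_add, Nat.cast_mul, Nat.cast_comm,
        add_comm]

theorem ascPochhammer_eq_sum_stirlingFirst {R : Type*} [Semiring R] (m : ℕ) :
    ascPochhammer R m = ∑ k ∈ range (m + 1), C (stirlingFirst m k : R) * X ^ k := by
  ext k
  simp only [coeff_ascPochhammer, finsetSum_coeff, coeff_C_mul_X_pow, sum_ite_eq, mem_range]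
  split_ifs with hk
  · rfl
  · rw [stirlingFirst_eq_zero_of_lt (by omega), Nat.cast_zero]

theorem ascPochhammer_succ_eval_eq_mul_sum {R : Type*} [CommSemiring R] (m : ℕ) (x : R) :
    (ascPochhammer R (m + 1)).eval x =
      x * ∑ t ∈ range (m + 1), (stirlingFirst (m + 1) (t + 1) : R) * x ^ t := by
  rw [ascPochhammer_eq_sum_stirlingFirst, eval_finsetSum, sum_range_succ', mul_sum]
  simp only [eval_C_mul, eval_X_pow, stirlingFirst_succ_zero, Nat.cast_zero, zero_mul, add_zero]
  exact sum_congr rfl fun t _ => by ring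

theorem factorial_mul_choose_eq_ascPochhammer_eval {R : Type*} [Semiring R] (j p : ℕ) :
    ((p + 1)! * (j + p).choose (p + 1) : R) = (ascPochhammer R (p + 1)).eval (j : R) := by
  rw [ascPochhammer_nat_eq_natCast_ascFactorial, ascFactorial_eq_factorial_mul_choose',
    show j + (p + 1) - 1 = j + p by omega]
  push_cast; rfl

theorem one_div_mul_choose_eq_sum_stirlingFirst (p j : ℕ) (hj : j ≠ 0) :
    1 / (j : ℚ) * (j + p).choose (p + 1) =
      1 / ((p + 1)! : ℚ) *
        ∑ t ∈ range (p + 1), (stirlingFirst (p + 1) (t + 1) : ℚ) * (j : ℚ) ^ t := by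
  have key := factorial_mul_choose_eq_ascPochhammer_eval (R := ℚ) j p
  rw [ascPochhammer_succ_eval_eq_mul_sum] at key
  have hj' : (j : ℚ) ≠ 0 := by exact_mod_cast hj
  field_simp
  linear_combination key

theorem stmt_8_general (p n : ℕ) :
    ∑ j ∈ Finset.Icc 1 n, (1 / (j : ℚ)) * ((j + p).choose (p + 1) : ℚ) =
      (1 / (Nat.factorial (p + 1) : ℚ)) *
        ∑ t ∈ Finset.range (p + 1),
          (stirling (p + 1) (t + 1) : ℚ) * ∑ k ∈ Finset.Icc 1 n, (k : ℚ) ^ t := by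
  rw [sum_congr rfl fun j hj =>
      one_div_mul_choose_eq_sum_stirlingFirst p j (Nat.pos_iff_ne_zero.mp (mem_Icc.mp hj).1),
    ← mul_sum, sum_comm]
  simp only [stirling_eq_stirlingFirst, mul_sum]

theorem stmt_8 (p n : ℕ) (hn : 1 ≤ n) :
    ∑ j ∈ Finset.Icc 1 n, (1 / (j : ℚ)) * ((j + p).choose (p + 1) : ℚ) =
      (1 / (Nat.factorial (p + 1) : ℚ)) *
        ∑ t ∈ Finset.range (p + 1),
          (stirling (p + 1) (t + 1) : ℚ) * ∑ k ∈ Finset.Icc 1 n, (k : ℚ) ^ t :=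
  stmt_8_general p n
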